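/- arXiv:math/0605323 — 4 statements merged into one kernel-verified Lean document; each statement's English description precedes it below -/
import Mathlib

section
/- Let P and Q be probability distributions on a finite set A with Q strictly positive, and suppose max_{a∈A} |P(a) − Q(a)| ≤ (min_{a∈A} Q(a))/2. Then the Kullback–Leibler divergence satisfies Σ_{a∈A} P(a)·log(P(a)/Q(a)) ≤ (1/min_{a∈A} Q(a)) · Σ_{a∈A} (P(a) − Q(a))². -/
/-!
Since `log x ≤ x - 1`, each term satisfies `p log (p/q) ≤ p (p/q - 1) = (p - q) + (p - q)²/q`.
Summing, the linear terms cancel because `P` and `Q` have the same total mass, so the divergence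
is bounded by the χ²-divergence `∑ (P a - Q a)² / Q a`, and `Q a ≥ min Q` finishes the bound.
-/

open Finset Real

theorem Real.mul_log_div_le {p q : ℝ} (hp : 0 ≤ p) (hq : 0 < q) :
    p * log (p / q) ≤ p - q + (p - q) ^ 2 / q := by
  calc p * log (p / q) ≤ p * (p / q - 1) := by
        rcases hp.eq_or_lt with rfl | hp
        · simp
        · exact mul_le_mul_of_nonneg_left (log_le_sub_one_of_pos (div_pos hp hq)) hp.le
    _ = p - q + (p - q) ^ 2 / q := by field_simp; ring

theorem Finset.sum_mul_log_div_le_sum_sq_div {ι : Type*} (s : Finset ι)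
    {P Q : ι → ℝ} (hP : ∀ a ∈ s, 0 ≤ P a) (hQ : ∀ a ∈ s, 0 < Q a)
    (hPQ : ∑ a ∈ s, P a = ∑ a ∈ s, Q a) :
    ∑ a ∈ s, P a * log (P a / Q a) ≤ ∑ a ∈ s, (P a - Q a) ^ 2 / Q a :=
  calc ∑ a ∈ s, P a * log (P a / Q a)
      ≤ ∑ a ∈ s, (P a - Q a + (P a - Q a) ^ 2 / Q a) :=
        sum_le_sum fun a ha => mul_log_div_le (hP a ha) (hQ a ha)
    _ = ∑ a ∈ s, (P a - Q a) ^ 2 / Q a := by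
        rw [sum_add_distrib, sum_sub_distrib, hPQ, sub_self, zero_add]

theorem stmt3_general {A : Type*} [Fintype A] [Nonempty A] (P Q : A → ℝ)
    (hP0 : ∀ a, 0 ≤ P a) (hQ0 : ∀ a, 0 < Q a)
    (hP1 : ∑ a, P a = 1) (hQ1 : ∑ a, Q a = 1) :
    ∑ a, P a * Real.log (P a / Q a) ≤
      (1 / Finset.univ.inf' Finset.univ_nonempty Q) * ∑ a, (P a - Q a) ^ 2 := by
  set m := Finset.univ.inf' Finset.univ_nonempty Q
  have hm : 0 < m := (lt_inf'_iff _).2 fun a _ => hQ0 a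
  calc ∑ a, P a * log (P a / Q a)
      ≤ ∑ a, (P a - Q a) ^ 2 / Q a :=
        univ.sum_mul_log_div_le_sum_sq_div (fun a _ => hP0 a) (fun a _ => hQ0 a)
          (hP1.trans hQ1.symm)
    _ ≤ ∑ a, (P a - Q a) ^ 2 / m :=
        sum_le_sum fun a _ => div_le_div_of_nonneg_left (sq_nonneg _) hm (inf'_le _ (mem_univ a))
    _ = 1 / m * ∑ a, (P a - Q a) ^ 2 := by
        rw [mul_sum]; exact sum_congr rfl fun a _ => one_div_mul_eq_div _ _ |>.symm

/-- Lemma A.7: if P and Q are probability distributions on a finite set A with Q strictly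
positive and max |P(a) − Q(a)| ≤ (min Q)/2, then
D(P‖Q) ≤ (1/min Q) · Σ (P(a) − Q(a))². -/
theorem stmt3 {A : Type*} [Fintype A] [Nonempty A] (P Q : A → ℝ)
    (hP0 : ∀ a, 0 ≤ P a) (hQ0 : ∀ a, 0 < Q a)
    (hP1 : ∑ a, P a = 1) (hQ1 : ∑ a, Q a = 1)
    (hclose : ∀ a, |P a - Q a| ≤ (Finset.univ.inf' Finset.univ_nonempty Q) / 2) :
    ∑ a, P a * Real.log (P a / Q a) ≤
      (1 / Finset.univ.inf' Finset.univ_nonempty Q) * ∑ a, (P a - Q a) ^ 2 :=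
  stmt3_general P Q hP0 hQ0 hP1 hQ1
end

section
/- For a Markov random field on ℤ^d with strictly positive finite-dimensional distributions and basic neighborhood Γ_0, if a neighborhood Γ satisfies Q(a(i) | a(Γ^i)) = Q_{Γ_0}(a(i) | a(Γ_0^i)) for all sites i and all configurations, then Γ is itself a Markov neighborhood, i.e., for any finite Δ ⊇ Γ with i ∉ Δ, Q(a(i) | a(Δ^i)) = Q(a(i) | a(Γ^i)). -/
open MeasureTheory

/-- The probability of the cylinder set determined by the configuration `a` on the finite
region `Δ`. -/
noncomputable def cylProb {d : ℕ} {A : Type*} [MeasurableSpace A]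
    (μ : Measure ((Fin d → ℤ) → A)) (Δ : Finset (Fin d → ℤ)) (a : (Fin d → ℤ) → A) : ℝ :=
  (μ {x | ∀ i ∈ Δ, x i = a i}).toReal

/-- The conditional probability Q(a(Δ) | a(Φ)). -/
noncomputable def condProb {d : ℕ} {A : Type*} [MeasurableSpace A]
    (μ : Measure ((Fin d → ℤ) → A)) (Δ Φ : Finset (Fin d → ℤ)) (a : (Fin d → ℤ) → A) : ℝ :=
  cylProb μ (Δ ∪ Φ) a / cylProb μ Φ a

/-!
Let `s` be the conditional probability of `a(i)` given `a` on `Γ^i`. Once the conditioning set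
contains `Γ0^i`, the Markov property and the hypothesis on `Γ` give the conditional probability
`spec (a i) _ = s` for every configuration agreeing with `a` on `{i} ∪ Δ`, i.e.
`P(a(i), a(Δ ∪ Γ0^i)) = s · P(a(Δ ∪ Γ0^i))`. Summing out the values at the sites of
`Γ0^i \ Δ`, one at a time, yields `P(a(i), a(Δ)) = s · P(a(Δ))`.

The σ-algebra on `A` is arbitrary, so the cylinders `{x | x = a on Δ}` need not be measurable
and `μ` is applied to them as an outer measure; they have the same measure as the measurable
cylinders of measurable atoms, over which the summation is an honest finite additivity.
-/

lemma mem_measurableAtom_comm {β : Type*} [MeasurableSpace β] {x y : β}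
    (h : y ∈ measurableAtom x) : x ∈ measurableAtom y := by
  rw [measurableAtom_eq_of_mem h]
  exact mem_measurableAtom_self x

lemma mem_measurableAtom_pi {ι : Type*} {α : ι → Type*} [∀ i, MeasurableSpace (α i)]
    {x y : ∀ i, α i} (h : ∀ i, y i ∈ measurableAtom (x i)) : y ∈ measurableAtom x := by
  -- the sets saturated for the coordinatewise atom relation form a σ-algebra
  let saturated : MeasurableSpace (∀ i, α i) :=
    { MeasurableSet' := fun s => ∀ x y : ∀ i, α i,
        (∀ i, y i ∈ measurableAtom (x i)) → (x ∈ s ↔ y ∈ s)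
      measurableSet_empty := fun _ _ _ => Iff.rfl
      measurableSet_compl := fun s hs x y h => not_congr (hs x y h)
      measurableSet_iUnion := fun f hf x y h => by
        simp only [Set.mem_iUnion]
        exact exists_congr fun n => hf n x y h }
  have pi_le : MeasurableSpace.pi ≤ saturated := by
    refine iSup_le fun i => ?_
    rintro _ ⟨t, ht, rfl⟩ x y h
    exact ⟨fun hx => mem_of_mem_measurableAtom (h i) ht hx,
      fun hy => mem_of_mem_measurableAtom (mem_measurableAtom_comm (h i)) ht hy⟩
  simp only [measurableAtom, Set.mem_iInter]
  exact fun s hxs hs => (pi_le s hs x y h).mp hxs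

section AtomCylinder

variable {ι A : Type*} [MeasurableSpace A]

def atomCylinder (Δ : Finset ι) (a : ι → A) : Set (ι → A) :=
  {x | ∀ j ∈ Δ, x j ∈ measurableAtom (a j)}

lemma measurableSet_atomCylinder [Countable A] (Δ : Finset ι) (a : ι → A) :
    MeasurableSet (atomCylinder Δ a) := by
  have : atomCylinder Δ a
      = ⋂ j ∈ Δ, (fun x : ι → A => x j) ⁻¹' measurableAtom (a j) := by
    ext x
    simp [atomCylinder]
  rw [this]
  exact .biInter Δ.countable_toSet fun j _ =>
    measurable_pi_apply j (.measurableAtom_of_countable (a j))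

lemma measure_cylinder_eq_atomCylinder (μ : Measure (ι → A)) (Δ : Finset ι) (a : ι → A) :
    μ {x | ∀ j ∈ Δ, x j = a j} = μ (atomCylinder Δ a) := by
  classical
  refine le_antisymm (measure_mono fun x hx j hj => hx j hj ▸ mem_measurableAtom_self _) ?_
  calc μ (atomCylinder Δ a)
      ≤ μ (toMeasurable μ {x | ∀ j ∈ Δ, x j = a j}) := measure_mono ?_
    _ = μ {x | ∀ j ∈ Δ, x j = a j} := measure_toMeasurable _
  intro x hx
  have hy : Δ.piecewise a x ∈ {x | ∀ j ∈ Δ, x j = a j} :=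
    fun j hj => Δ.piecewise_eq_of_mem _ _ hj
  refine mem_of_mem_measurableAtom (mem_measurableAtom_pi fun j => ?_)
    (measurableSet_toMeasurable μ _) (subset_toMeasurable μ _ hy)
  by_cases hj : j ∈ Δ
  · simpa [hj] using hx j hj
  · simp [hj]

lemma atomCylinder_inter_preimage_eval [DecidableEq ι] {Δ : Finset ι} {k : ι} (hk : k ∉ Δ)
    (a : ι → A) (c : A) :
    atomCylinder Δ a ∩ (fun x => x k) ⁻¹' measurableAtom c
      = atomCylinder (insert k Δ) (Function.update a k c) := by
  ext x
  simp only [atomCylinder, Set.mem_inter_iff, Set.mem_preimage,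
    Finset.forall_mem_insert, Function.update_self]
  rw [and_comm]
  refine and_congr_right fun _ => forall₂_congr fun j hj => ?_
  rw [Function.update_of_ne (ne_of_mem_of_not_mem hj hk)]

end AtomCylinder

section CylProb

variable {d : ℕ} {A : Type*} [MeasurableSpace A] (μ : Measure ((Fin d → ℤ) → A))

lemma cylProb_congr {Δ : Finset (Fin d → ℤ)} {a a' : (Fin d → ℤ) → A}
    (h : ∀ j ∈ Δ, a' j = a j) : cylProb μ Δ a' = cylProb μ Δ a := by
  unfold cylProb
  congr 2
  ext x
  exact forall₂_congr fun j hj => by rw [h j hj]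

lemma condProb_congr {S Φ : Finset (Fin d → ℤ)} {a a' : (Fin d → ℤ) → A}
    (h : ∀ j ∈ S ∪ Φ, a' j = a j) : condProb μ S Φ a' = condProb μ S Φ a := by
  unfold condProb
  rw [cylProb_congr μ h, cylProb_congr μ fun j hj => h j (Finset.mem_union_right S hj)]

lemma cylProb_insert_update {Δ : Finset (Fin d → ℤ)} {k : Fin d → ℤ} (hk : k ∉ Δ)
    (a : (Fin d → ℤ) → A) (c : A) :
    cylProb μ (insert k Δ) (Function.update a k c)
      = (μ (atomCylinder Δ a ∩ (fun x => x k) ⁻¹' measurableAtom c)).toReal := by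
  rw [cylProb, measure_cylinder_eq_atomCylinder, atomCylinder_inter_preimage_eval hk]

lemma cylProb_eq_sum_measurableAtom [Fintype A] [IsFiniteMeasure μ]
    (Δ : Finset (Fin d → ℤ)) (a : (Fin d → ℤ) → A) (k : Fin d → ℤ) :
    cylProb μ Δ a = ∑ B ∈ Finset.univ.image measurableAtom,
      (μ (atomCylinder Δ a ∩ (fun x => x k) ⁻¹' B)).toReal := by
  set atoms : Finset (Set A) := Finset.univ.image measurableAtom
  set piece : Set A → Set ((Fin d → ℤ) → A) :=
    fun B => atomCylinder Δ a ∩ (fun x => x k) ⁻¹' B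
  have hcover : atomCylinder Δ a = ⋃ B ∈ atoms, piece B := by
    ext x
    simpa [atoms, piece] using fun _ => ⟨x k, mem_measurableAtom_self (x k)⟩
  have hdisj : (atoms : Set (Set A)).PairwiseDisjoint piece := by
    simp only [atoms, Finset.coe_image, Finset.coe_univ, Set.image_univ]
    rintro _ ⟨c, rfl⟩ _ ⟨c', rfl⟩ hne
    refine Set.disjoint_left.mpr fun x hx hx' => hne ?_
    rw [← measurableAtom_eq_of_mem hx.2, ← measurableAtom_eq_of_mem hx'.2]
  have hmeas : ∀ B ∈ atoms, MeasurableSet (piece B) := by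
    simp only [atoms, Finset.mem_image, Finset.mem_univ, true_and, forall_exists_index,
      forall_apply_eq_imp_iff]
    exact fun c => (measurableSet_atomCylinder Δ a).inter
      (measurable_pi_apply k (.measurableAtom_of_countable c))
  rw [cylProb, measure_cylinder_eq_atomCylinder]
  nth_rw 1 [hcover]
  rw [measure_biUnion_finset hdisj hmeas, ENNReal.toReal_sum fun _ _ => measure_ne_top μ _]

/-- Marginalization over the sites of `Λ`. -/
lemma cylProb_union_eq_mul_of_forall_extension [Fintype A] [IsFiniteMeasure μ]
    (S Λ : Finset (Fin d → ℤ)) (hSΛ : Disjoint S Λ) (s : ℝ) (Δ : Finset (Fin d → ℤ))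
    (a : (Fin d → ℤ) → A)
    (h : ∀ a', (∀ j ∈ S ∪ Δ, a' j = a j) →
      cylProb μ (S ∪ (Δ ∪ Λ)) a' = s * cylProb μ (Δ ∪ Λ) a') :
    cylProb μ (S ∪ Δ) a = s * cylProb μ Δ a := by
  induction Λ using Finset.induction_on generalizing Δ a with
  | empty => simpa using h a fun _ _ => rfl
  | insert k Λ hkΛ ih =>
    have hSΛ' : Disjoint S Λ := hSΛ.mono_right (Finset.subset_insert k Λ)
    by_cases hkΔ : k ∈ Δ
    · refine ih hSΛ' Δ a fun a' ha' => ?_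
      simpa [Finset.union_insert, Finset.insert_eq_of_mem (Finset.mem_union_left Λ hkΔ)]
        using h a' ha'
    have hkS : k ∉ S := Finset.disjoint_right.mp hSΛ (Finset.mem_insert_self k Λ)
    have hkSΔ : k ∉ S ∪ Δ := by simp [hkS, hkΔ]
    rw [cylProb_eq_sum_measurableAtom μ _ a k, cylProb_eq_sum_measurableAtom μ Δ a k,
      Finset.mul_sum]
    refine Finset.sum_congr rfl fun B hB => ?_
    obtain ⟨c, -, rfl⟩ := Finset.mem_image.mp hB
    rw [← cylProb_insert_update μ hkSΔ, ← cylProb_insert_update μ hkΔ,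
      ← Finset.union_insert]
    refine ih hSΛ' (insert k Δ) (Function.update a k c) fun a' ha' => ?_
    rw [Finset.insert_union, ← Finset.union_insert]
    refine h a' fun j hj => ?_
    rw [ha' j (Finset.union_subset_union_right (Finset.subset_insert k Δ) hj),
      Function.update_of_ne (ne_of_mem_of_not_mem hj hkSΔ)]

end CylProb

theorem stmt5_general {d : ℕ} {A : Type*} [Fintype A] [MeasurableSpace A]
    (μ : Measure ((Fin d → ℤ) → A)) [IsProbabilityMeasure μ]
    (hpos : ∀ Δ a, 0 < cylProb μ Δ a)
    (Γ0 Γ : Finset (Fin d → ℤ))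
    (h00 : (0 : Fin d → ℤ) ∉ Γ0)
    (spec : A → ((Fin d → ℤ) → A) → ℝ)
    (hMarkov : ∀ (i : Fin d → ℤ) (Δ : Finset (Fin d → ℤ)) (a : (Fin d → ℤ) → A),
      Γ0.image (fun j => i + j) ⊆ Δ → i ∉ Δ →
      condProb μ {i} Δ a = spec (a i) (fun j => a (i + j)))
    (hΓ : ∀ (i : Fin d → ℤ) (a : (Fin d → ℤ) → A),
      condProb μ {i} (Γ.image (fun j => i + j)) a = spec (a i) (fun j => a (i + j)))
    (i : Fin d → ℤ) (Δ : Finset (Fin d → ℤ)) (a : (Fin d → ℤ) → A)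
    (hΔ : Γ.image (fun j => i + j) ⊆ Δ) (hiΔ : i ∉ Δ) :
    condProb μ {i} Δ a = condProb μ {i} (Γ.image (fun j => i + j)) a := by
  set G0 := Γ0.image (fun j => i + j)
  have hiG0 : i ∉ G0 := by simpa [G0] using h00
  have hfactor : ∀ a', (∀ j ∈ {i} ∪ Δ, a' j = a j) → cylProb μ ({i} ∪ (Δ ∪ G0)) a'
      = condProb μ {i} (Γ.image (fun j => i + j)) a * cylProb μ (Δ ∪ G0) a' := by
    intro a' ha'
    have hcond :
        condProb μ {i} (Δ ∪ G0) a' = condProb μ {i} (Γ.image (fun j => i + j)) a := by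
      rw [hMarkov i _ a' Finset.subset_union_right (Finset.notMem_union.mpr ⟨hiΔ, hiG0⟩),
        ← hΓ i a']
      exact condProb_congr μ fun j hj => ha' j (Finset.union_subset_union_right hΔ hj)
    rw [← hcond, condProb, div_mul_cancel₀ _ (hpos _ _).ne']
  rw [condProb, cylProb_union_eq_mul_of_forall_extension μ {i} G0
    (Finset.disjoint_singleton_left.mpr hiG0) _ Δ a hfactor,
    mul_div_cancel_right₀ _ (hpos Δ a).ne']

/-- Lemma A.2: if the single-site conditional probabilities given the Γ-neighborhood coincide
with the one-point specification of the Markov field (with basic neighborhood Γ0), then Γ is a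
Markov neighborhood: conditioning on any larger finite set Δ ⊇ Γ^i with i ∉ Δ gives the same
conditional probability. -/
theorem stmt5 {d : ℕ} {A : Type*} [Fintype A] [MeasurableSpace A]
    (μ : Measure ((Fin d → ℤ) → A)) [IsProbabilityMeasure μ]
    (hpos : ∀ Δ a, 0 < cylProb μ Δ a)
    (Γ0 Γ : Finset (Fin d → ℤ))
    (h00 : (0 : Fin d → ℤ) ∉ Γ0) (hsym0 : ∀ x ∈ Γ0, -x ∈ Γ0)
    (h0 : (0 : Fin d → ℤ) ∉ Γ) (hsym : ∀ x ∈ Γ, -x ∈ Γ)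
    (spec : A → ((Fin d → ℤ) → A) → ℝ)
    (hMarkov : ∀ (i : Fin d → ℤ) (Δ : Finset (Fin d → ℤ)) (a : (Fin d → ℤ) → A),
      Γ0.image (fun j => i + j) ⊆ Δ → i ∉ Δ →
      condProb μ {i} Δ a = spec (a i) (fun j => a (i + j)))
    (hΓ : ∀ (i : Fin d → ℤ) (a : (Fin d → ℤ) → A),
      condProb μ {i} (Γ.image (fun j => i + j)) a = spec (a i) (fun j => a (i + j)))
    (i : Fin d → ℤ) (Δ : Finset (Fin d → ℤ)) (a : (Fin d → ℤ) → A)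
    (hΔ : Γ.image (fun j => i + j) ⊆ Δ) (hiΔ : i ∉ Δ) :
    condProb μ {i} Δ a = condProb μ {i} (Γ.image (fun j => i + j)) a :=
  stmt5_general μ hpos Γ0 Γ h00 spec hMarkov hΓ i Δ a hΔ hiΔ
end

section
/- Fix constants 0 < q ≤ 1, d ≥ 1, α > 0, and let R_n = ⌊α^{1/(2d)}·⌈log L_n⌉^{1/(2d)}⌋ where L_n → ∞. Then the sequence b_n = exp(−L_n · q^{(3R_n)^d} / (16·(5R_n)^d)) · (4R_n+1)^d · (q'+1)^{(2R_n+1)^d/2} is summable in n for any constant q' > 0, provided L_n ≥ n for all n. -/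
open Filter

set_option maxHeartbeats 1000000

lemma aux_rpow_pow (x : ℝ) (hx : 0 ≤ x) {d : ℕ} (hd : d ≠ 0) :
    (x ^ ((1:ℝ)/(2*d)))^d = x ^ ((1:ℝ)/2) := by
  rw [← Real.rpow_natCast (x ^ ((1:ℝ)/(2*d))) d, ← Real.rpow_mul hx]
  congr 1
  have : (d:ℝ) ≠ 0 := Nat.cast_ne_zero.mpr hd
  field_simp

lemma lemA (a C : ℝ) (ha : 0 < a) (hC : 1 ≤ C) :
    ∀ᶠ u in atTop, C * Real.sqrt (a*(u+1)) * (2*u + C * Real.sqrt (a*(u+1)))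
      ≤ Real.exp (u - C * Real.sqrt (a*(u+1))) := by
  have hexp : Tendsto (fun u : ℝ => Real.exp (u/2) / (u/2)^2) atTop atTop :=
    (Real.tendsto_exp_div_pow_atTop 2).comp (tendsto_id.atTop_div_const two_pos)
  have h2 : ∀ᶠ u : ℝ in atTop, 3*u^2 ≤ Real.exp (u/2) := by
    filter_upwards [hexp.eventually_ge_atTop 12, eventually_ge_atTop (1:ℝ)] with u h hu1
    have h' : 12 * (u/2)^2 ≤ Real.exp (u/2) := by
      rw [le_div_iff₀ (by positivity)] at h
      linarith
    nlinarith
  have h1 : ∀ᶠ u : ℝ in atTop, C * Real.sqrt (a*(u+1)) ≤ u/2 := by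
    filter_upwards [eventually_ge_atTop (max 1 (8*C^2*a + 8))] with u hu
    have hu1 : 1 ≤ u := le_trans (le_max_left _ _) hu
    have hu2 : 8*C^2*a + 8 ≤ u := le_trans (le_max_right _ _) hu
    have hs : Real.sqrt (a*(u+1)) ≤ u/(2*C) := by
      rw [show u/(2*C) = Real.sqrt ((u/(2*C))^2) by
        rw [Real.sqrt_sq (by positivity)]]
      apply Real.sqrt_le_sqrt
      rw [div_pow]
      rw [le_div_iff₀ (by positivity)]
      nlinarith [sq_nonneg C, sq_nonneg u]
    calc C * Real.sqrt (a*(u+1)) ≤ C * (u/(2*C)) :=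
          mul_le_mul_of_nonneg_left hs (by linarith)
      _ = u/2 := by field_simp
  filter_upwards [h1, h2, eventually_ge_atTop (1:ℝ)] with u h1u h2u hu1
  set s := Real.sqrt (a*(u+1)) with hs
  have hs0 : 0 ≤ s := Real.sqrt_nonneg _
  have hCs : 0 ≤ C * s := by positivity
  have : C * s * (2*u + C*s) ≤ 3*u^2 := by nlinarith
  calc C * s * (2*u + C*s) ≤ 3*u^2 := this
    _ ≤ Real.exp (u/2) := h2u
    _ ≤ Real.exp (u - C*s) := Real.exp_le_exp.mpr (by linarith)


/-- R_n = ⌊α^{1/(2d)}·⌈log L_n⌉^{1/(2d)}⌋, as a real number. -/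
noncomputable def Rseq (d : ℕ) (α : ℝ) (L : ℕ → ℝ) (n : ℕ) : ℝ :=
  (⌊α ^ ((1 : ℝ) / (2 * d)) * ((⌈Real.log (L n)⌉ : ℝ)) ^ ((1 : ℝ) / (2 * d))⌋ : ℤ)

/-- The summability estimate enabling the Borel–Cantelli argument in Lemma 3.1: with
R_n = ⌊α^{1/(2d)}·⌈log L_n⌉^{1/(2d)}⌋ and L_n → ∞, L_n ≥ n, the sequence
exp(−L_n·q^{(3R_n)^d}/(16·(5R_n)^d))·(4R_n+1)^d·(q'+1)^{(2R_n+1)^d/2} is summable. -/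
theorem stmt14 (d : ℕ) (hd : 1 ≤ d) (q : ℝ) (hq0 : 0 < q) (hq1 : q ≤ 1)
    (α : ℝ) (hα : 0 < α) (q' : ℝ) (hq' : 0 < q') (L : ℕ → ℝ)
    (hL : Tendsto L atTop atTop) (hLn : ∀ n : ℕ, (n : ℝ) ≤ L n) :
    Summable (fun n : ℕ =>
      Real.exp (-(L n * q ^ ((3 * Rseq d α L n) ^ d) / (16 * (5 * Rseq d α L n) ^ d))) *
        (4 * Rseq d α L n + 1) ^ d *
        (q' + 1) ^ ((2 * Rseq d α L n + 1) ^ d / 2)) := by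
  have hd' : d ≠ 0 := Nat.one_le_iff_ne_zero.mp hd
  have hlogq : Real.log q ≤ 0 := Real.log_nonpos hq0.le hq1
  have hlogq' : 0 ≤ Real.log (q' + 1) := Real.log_nonneg (by linarith)
  have h5d : (1:ℝ) ≤ 5^d := one_le_pow₀ (by norm_num)
  have h3d : (1:ℝ) ≤ 3^d := one_le_pow₀ (by norm_num)
  set C : ℝ := 16 * 5^d + 3^d * (-Real.log q + Real.log (q' + 1)) + 1 with hCdef
  have hC1 : 1 ≤ C := by nlinarith
  have hC3 : 3^d * (-Real.log q) ≤ C := by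
    rw [hCdef]; nlinarith [mul_nonneg (show (0:ℝ) ≤ 3^d by positivity) hlogq']
  have hC16 : (16:ℝ)*5^d ≤ C := by
    rw [hCdef]; nlinarith [mul_nonneg (show (0:ℝ) ≤ 3^d by positivity) hlogq']
  have hC23 : (5:ℝ)^d + 3^d/2 * Real.log (q'+1) ≤ C := by
    rw [hCdef]; nlinarith [mul_nonneg (show (0:ℝ) ≤ 3^d by positivity) hlogq']
  have hCpos : (0:ℝ) < C := lt_of_lt_of_le one_pos hC1
  have hu : Tendsto (fun n => Real.log (L n)) atTop atTop := Real.tendsto_log_atTop.comp hL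
  have hA := hu.eventually (lemA α C hα hC1)
  have hE1 := hu.eventually_ge_atTop 1
  have hE2 := hu.eventually_ge_atTop (1/α)
  have hsum : Summable (fun n : ℕ => (n:ℝ)^(-2:ℝ)) :=
    Real.summable_nat_rpow.mpr (by norm_num)
  apply summable_of_isBigO_nat hsum
  rw [Asymptotics.isBigO_iff]
  refine ⟨1, ?_⟩
  filter_upwards [hA, hE1, hE2, eventually_ge_atTop 1] with n hAn hu1 huα hn1
  set u := Real.log (L n) with hu_def
  set m := Real.sqrt (α * (u + 1)) with hm_def
  have hn1' : (1:ℝ) ≤ (n:ℝ) := by exact_mod_cast hn1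
  have hLpos : (0:ℝ) < L n := lt_of_lt_of_le one_pos (le_trans hn1' (hLn n))
  have hexp_log : Real.exp u = L n := Real.exp_log hLpos
  set t : ℝ := ((⌈u⌉ : ℤ) : ℝ) with ht_def
  have hut : u ≤ t := Int.le_ceil u
  have ht1 : (1:ℝ) ≤ t := le_trans hu1 hut
  have htu1 : t ≤ u + 1 := (Int.ceil_lt_add_one u).le
  have hαt1 : 1 ≤ α * t := by
    have h' : 1/α ≤ t := le_trans huα hut
    rw [div_le_iff₀ hα] at h'
    linarith [h']
  set e : ℝ := (1:ℝ)/(2*(d:ℝ)) with he_def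
  have he0 : 0 ≤ e := by positivity
  set x : ℝ := α ^ e * t ^ e with hx_def
  have ht0 : (0:ℝ) ≤ t := by linarith
  have hx_eq : x = (α*t) ^ e := (Real.mul_rpow hα.le ht0).symm
  have hx1 : (1:ℝ) ≤ x := by
    rw [hx_eq]
    calc (1:ℝ) = 1 ^ e := (Real.one_rpow e).symm
      _ ≤ (α*t) ^ e := Real.rpow_le_rpow (by norm_num) hαt1 he0
  have hR_def : Rseq d α L n = ((⌊x⌋ : ℤ) : ℝ) := rfl
  set R := Rseq d α L n with hRdef
  have h1R : (1:ℝ) ≤ R := by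
    rw [hR_def]
    exact_mod_cast Int.le_floor.mpr (by exact_mod_cast hx1)
  have hRx : R ≤ x := by rw [hR_def]; exact Int.floor_le x
  have hR0 : (0:ℝ) ≤ R := by linarith
  have hRpos : (0:ℝ) < R := by linarith
  clear_value C u m t e x R
  have hxd : x ^ d = Real.sqrt (α * t) := by
    rw [hx_def, he_def, mul_pow, aux_rpow_pow α hα.le hd', aux_rpow_pow t ht0 hd']
    rw [← Real.sqrt_eq_rpow, ← Real.sqrt_eq_rpow, ← Real.sqrt_mul hα.le]
  have hmm' : Real.sqrt (α*t) ≤ m := by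
    rw [hm_def]
    exact Real.sqrt_le_sqrt (mul_le_mul_of_nonneg_left htu1 hα.le)
  have hRdm : R^d ≤ m := le_trans (le_trans (pow_le_pow_left₀ hR0 hRx d) (le_of_eq hxd)) hmm'
  have hRd1 : (1:ℝ) ≤ R^d := one_le_pow₀ h1R
  have hm1 : (1:ℝ) ≤ m := le_trans hRd1 hRdm
  have hm0 : (0:ℝ) < m := by linarith
  -- bound on q-power
  have h3Rd : (3*R)^d ≤ 3^d * m := by
    rw [mul_pow]; exact mul_le_mul_of_nonneg_left hRdm (by positivity)
  have h3Rd0 : 0 ≤ (3*R)^d := by positivity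
  have hq_low : Real.exp (-(C*m)) ≤ q ^ ((3*R)^d) := by
    have key : -(C*m) ≤ Real.log q * (3*R)^d := by
      have step : (-Real.log q) * (3*R)^d ≤ C * m := by
        calc (-Real.log q) * (3*R)^d ≤ (-Real.log q)*(3^d*m) :=
              mul_le_mul_of_nonneg_left h3Rd (neg_nonneg.mpr hlogq)
          _ = (3^d*(-Real.log q))*m := by ring
          _ ≤ C*m := mul_le_mul_of_nonneg_right hC3 hm0.le
      linarith [step]
    calc Real.exp (-(C*m)) ≤ Real.exp (Real.log q * (3*R)^d) := Real.exp_le_exp.mpr key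
      _ = q ^ ((3*R)^d) := (Real.rpow_def_of_pos hq0 _).symm
  have hD : 16*(5*R)^d ≤ C * m := by
    calc 16*(5*R)^d = (16*5^d)*R^d := by rw [mul_pow]; ring
      _ ≤ (16*5^d)*m := mul_le_mul_of_nonneg_left hRdm (by positivity)
      _ ≤ C*m := mul_le_mul_of_nonneg_right hC16 hm0.le
  have hDpos : (0:ℝ) < 16*(5*R)^d := by
    have : (0:ℝ) < (5*R)^d := pow_pos (by linarith) d
    linarith
  have hE : Real.exp (u - C*m) / (C*m) ≤ L n * q ^ ((3*R)^d) / (16*(5*R)^d) := by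
    have hnum : Real.exp (u - C*m) ≤ L n * q ^ ((3*R)^d) := by
      have : Real.exp (u - C*m) = Real.exp u * Real.exp (-(C*m)) := by
        rw [← Real.exp_add]; ring_nf
      rw [this, hexp_log]
      exact mul_le_mul_of_nonneg_left hq_low hLpos.le
    exact div_le_div₀ (by positivity) hnum (by positivity) hD
  have h2u : 2*u + C*m ≤ Real.exp (u - C*m) / (C*m) := by
    rw [le_div_iff₀ (by positivity)]
    calc (2*u + C*m) * (C*m) = C*m*(2*u + C*m) := by ring
      _ ≤ Real.exp (u - C*m) := hAn
  have hb1 : Real.exp (-(L n * q ^ ((3*R)^d) / (16*(5*R)^d)))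
      ≤ Real.exp (-(2*u + C*m)) :=
    Real.exp_le_exp.mpr (neg_le_neg (le_trans h2u hE))
  have hF : (4*R+1)^d * (q'+1) ^ ((2*R+1)^d/2) ≤ Real.exp (C*m) := by
    have h4 : (4*R+1)^d ≤ 5^d * m := by
      calc (4*R+1)^d ≤ (5*R)^d := pow_le_pow_left₀ (by linarith) (by linarith) d
        _ = 5^d * R^d := mul_pow 5 R d
        _ ≤ 5^d * m := mul_le_mul_of_nonneg_left hRdm (by positivity)
    have h4' : (4*R+1)^d ≤ Real.exp (5^d * m) :=
      h4.trans (by linarith [Real.add_one_le_exp ((5:ℝ)^d*m)])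
    have h2Rd : (2*R+1)^d ≤ 3^d * m := by
      calc (2*R+1)^d ≤ (3*R)^d := pow_le_pow_left₀ (by linarith) (by linarith) d
        _ ≤ 3^d * m := h3Rd
    have h5 : (q'+1) ^ ((2*R+1)^d/2) ≤ Real.exp ((3^d*m/2) * Real.log (q'+1)) := by
      rw [Real.rpow_def_of_pos (by linarith : (0:ℝ) < q'+1)]
      apply Real.exp_le_exp.mpr
      calc Real.log (q'+1) * ((2*R+1)^d/2) = (Real.log (q'+1) * (2*R+1)^d)/2 := by ring
        _ ≤ (Real.log (q'+1) * (3^d*m))/2 := by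
            linarith [mul_le_mul_of_nonneg_left h2Rd hlogq']
        _ = 3^d*m/2 * Real.log (q'+1) := by ring
    have hF0 : (0:ℝ) ≤ (q'+1) ^ ((2*R+1)^d/2) := Real.rpow_nonneg (by linarith) _
    calc (4*R+1)^d * (q'+1) ^ ((2*R+1)^d/2)
        ≤ Real.exp (5^d * m) * Real.exp ((3^d*m/2) * Real.log (q'+1)) :=
          mul_le_mul h4' h5 hF0 (Real.exp_nonneg _)
      _ = Real.exp (5^d * m + (3^d*m/2) * Real.log (q'+1)) := (Real.exp_add _ _).symm
      _ ≤ Real.exp (C*m) := by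
          apply Real.exp_le_exp.mpr
          calc 5^d * m + (3^d*m/2) * Real.log (q'+1)
              = ((5:ℝ)^d + 3^d/2 * Real.log (q'+1)) * m := by ring
            _ ≤ C*m := mul_le_mul_of_nonneg_right hC23 hm0.le
  have hF0' : (0:ℝ) ≤ (4*R+1)^d * (q'+1) ^ ((2*R+1)^d/2) :=
    mul_nonneg (pow_nonneg (by linarith) d) (Real.rpow_nonneg (by linarith) _)
  have hb : Real.exp (-(L n * q ^ ((3*R)^d) / (16*(5*R)^d))) * (4*R+1)^d
      * (q'+1) ^ ((2*R+1)^d/2) ≤ Real.exp (-(2*u)) := by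
    have := mul_le_mul hb1 hF hF0' (Real.exp_nonneg _)
    calc Real.exp (-(L n * q ^ ((3*R)^d) / (16*(5*R)^d))) * (4*R+1)^d
        * (q'+1) ^ ((2*R+1)^d/2)
        = Real.exp (-(L n * q ^ ((3*R)^d) / (16*(5*R)^d)))
          * ((4*R+1)^d * (q'+1) ^ ((2*R+1)^d/2)) := by ring
      _ ≤ Real.exp (-(2*u + C*m)) * Real.exp (C*m) := this
      _ = Real.exp (-(2*u)) := by rw [← Real.exp_add]; ring_nf
  have hfin : Real.exp (-(2*u)) ≤ (n:ℝ)^(-2:ℝ) := by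
    rw [Real.rpow_def_of_pos (by linarith : (0:ℝ) < (n:ℝ))]
    apply Real.exp_le_exp.mpr
    have hlogn : Real.log n ≤ u := by
      rw [hu_def]; exact Real.log_le_log (by linarith) (hLn n)
    linarith
  have hb0 : (0:ℝ) ≤ Real.exp (-(L n * q ^ ((3*R)^d) / (16*(5*R)^d))) * (4*R+1)^d
      * (q'+1) ^ ((2*R+1)^d/2) := by
    apply mul_nonneg (mul_nonneg (Real.exp_nonneg _) (pow_nonneg (by linarith) d))
      (Real.rpow_nonneg (by linarith) _)
  rw [Real.norm_eq_abs, Real.norm_eq_abs, one_mul,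
    abs_of_nonneg hb0, abs_of_nonneg (Real.rpow_nonneg (Nat.cast_nonneg n) _)]
  exact le_trans hb hfin
end

section
/- Let counts N(b) ≥ 1 be given for blocks b ∈ B ⊆ A^{Γ∪{0}}, let Q be a conditional probability matrix with all entries ≥ q_min > 0, and let N(a(Γ)) = Σ_{a(0): (a(Γ),a(0)) ∈ B} N(a(Γ),a(0)). Suppose for every block, |N(a(Γ),a(0))/N(a(Γ)) − Q(a(0)|a(Γ))| < sqrt(κ·log N(a(Γ)) / N(a(Γ))) and this bound is at most q_min/2. Then Σ_b N(b)·log( (N(b)/N(a(Γ))) / Q(a(0)|a(Γ)) ) < (κ·|A|/q_min) · Σ_{a(Γ)} log N(a(Γ)) ≤ (κ·|A|/q_min)·|A|^{|Γ|}·log N, where N = max_{a(Γ)} N(a(Γ)). -/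
lemma per_g {A : Type*} [Fintype A] [Nonempty A] (Nb : A → ℕ) (Qb : A → ℝ)
    (qmin κ : ℝ) (hqmin : 0 < qmin) (hQ : ∀ b, qmin ≤ Qb b) (hQ1 : ∑ b, Qb b = 1)
    (hM : 1 ≤ ∑ b, Nb b)
    (htyp : ∀ b, |(Nb b : ℝ) / ((∑ b', Nb b' : ℕ) : ℝ) - Qb b| <
      Real.sqrt (κ * Real.log ((∑ b', Nb b' : ℕ) : ℝ) / ((∑ b', Nb b' : ℕ) : ℝ))) :
    ∑ b, (Nb b : ℝ) * Real.log (((Nb b : ℝ) / ((∑ b', Nb b' : ℕ) : ℝ)) / Qb b) <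
      κ * Fintype.card A / qmin * Real.log ((∑ b', Nb b' : ℕ) : ℝ) := by
  set m : ℝ := ((∑ b', Nb b' : ℕ) : ℝ) with hmdef
  have hm : (0:ℝ) < m := by
    have : (1:ℝ) ≤ m := by rw [hmdef]; exact_mod_cast hM
    linarith
  have hm0 : m ≠ 0 := hm.ne'
  set t : ℝ := κ * Real.log m / m with htdef
  have ht : 0 < t := by
    have h := htyp (Classical.arbitrary A)
    have : 0 < Real.sqrt t := lt_of_le_of_lt (abs_nonneg _) h
    exact Real.sqrt_pos.mp this
  have hsq : ∀ b, ((Nb b : ℝ) / m - Qb b) ^ 2 < t := by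
    intro b
    have h := htyp b
    have h2 : |(Nb b : ℝ) / m - Qb b| ^ 2 < Real.sqrt t ^ 2 :=
      pow_lt_pow_left₀ h (abs_nonneg _) two_ne_zero
    rwa [sq_abs, Real.sq_sqrt ht.le] at h2
  have hQpos : ∀ b, 0 < Qb b := fun b => lt_of_lt_of_le hqmin (hQ b)
  have hp1 : ∑ b, (Nb b : ℝ) / m = 1 := by
    rw [← Finset.sum_div, div_eq_one_iff_eq hm0]
    rw [hmdef]
    push_cast
    rfl
  calc ∑ b, (Nb b : ℝ) * Real.log (((Nb b : ℝ) / m) / Qb b)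
      ≤ ∑ b, m * (((Nb b : ℝ) / m) ^ 2 / Qb b - (Nb b : ℝ) / m) := by
        refine Finset.sum_le_sum fun b _ => ?_
        rcases Nat.eq_zero_or_pos (Nb b) with h0 | h0
        · simp [h0]
        · have hNpos : (0:ℝ) < Nb b := by exact_mod_cast h0
          have hppos : 0 < (Nb b : ℝ) / m := div_pos hNpos hm
          have hQ0 : Qb b ≠ 0 := (hQpos b).ne'
          have hlog : Real.log (((Nb b : ℝ) / m) / Qb b) ≤ ((Nb b : ℝ) / m) / Qb b - 1 :=
            Real.log_le_sub_one_of_pos (div_pos hppos (hQpos b))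
          have hmul := mul_le_mul_of_nonneg_left hlog hNpos.le
          calc (Nb b : ℝ) * Real.log (((Nb b : ℝ) / m) / Qb b)
              ≤ (Nb b : ℝ) * (((Nb b : ℝ) / m) / Qb b - 1) := hmul
            _ = m * (((Nb b : ℝ) / m) ^ 2 / Qb b - (Nb b : ℝ) / m) := by
                field_simp
    _ = m * ∑ b, ((Nb b : ℝ) / m - Qb b) ^ 2 / Qb b := by
        rw [← Finset.mul_sum]
        congr 1
        have key : ∀ b : A, ((Nb b : ℝ) / m) ^ 2 / Qb b - (Nb b : ℝ) / m
            = ((Nb b : ℝ) / m - Qb b) ^ 2 / Qb b + ((Nb b : ℝ) / m - Qb b) := by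
          intro b
          have hQ0 : Qb b ≠ 0 := (hQpos b).ne'
          field_simp
          ring
        rw [Finset.sum_congr rfl fun b _ => key b, Finset.sum_add_distrib,
          Finset.sum_sub_distrib, hp1, hQ1]
        ring
    _ < m * (Fintype.card A * (t / qmin)) := by
        refine mul_lt_mul_of_pos_left ?_ hm
        have h : ∑ b : A, ((Nb b : ℝ) / m - Qb b) ^ 2 / Qb b < ∑ _b : A, t / qmin := by
          refine Finset.sum_lt_sum_of_nonempty Finset.univ_nonempty fun b _ => ?_
          calc ((Nb b : ℝ) / m - Qb b) ^ 2 / Qb b ≤ ((Nb b : ℝ) / m - Qb b) ^ 2 / qmin := by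
                gcongr
                exact hQ b
            _ < t / qmin := by gcongr; exact hsq b
        simpa using h
    _ = κ * Fintype.card A / qmin * Real.log m := by
        rw [htdef]
        field_simp

/-- The combination of Lemma A.7 with the typicality bound, as in the overestimation proof
(Proposition 4.1): the log-likelihood ratio between empirical conditional frequencies and the
true conditional probabilities, summed over all blocks, is less than
(κ|A|/q_min)·Σ_{a(Γ)} log N(a(Γ)) ≤ (κ|A|/q_min)·|A|^{|Γ|}·log N, where N is the maximal
conditioning count. -/
theorem stmt18 {A Γ : Type*} [Fintype A] [Fintype Γ] [DecidableEq Γ] [Nonempty A]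
    (N : (Γ → A) → A → ℕ) (hNe : ∃ g b, 1 ≤ N g b)
    (Q : (Γ → A) → A → ℝ) (qmin : ℝ) (hqmin : 0 < qmin)
    (hQ : ∀ g b, qmin ≤ Q g b) (hQ1 : ∀ g, ∑ b, Q g b = 1)
    (κ : ℝ) (hκ : 0 < κ)
    (htyp : ∀ g b, 1 ≤ ∑ b', N g b' →
      |(N g b : ℝ) / ((∑ b', N g b' : ℕ) : ℝ) - Q g b| <
          Real.sqrt (κ * Real.log ((∑ b', N g b' : ℕ) : ℝ) / ((∑ b', N g b' : ℕ) : ℝ)) ∧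
        Real.sqrt (κ * Real.log ((∑ b', N g b' : ℕ) : ℝ) / ((∑ b', N g b' : ℕ) : ℝ)) ≤
          qmin / 2) :
    (∑ g, ∑ b, (N g b : ℝ) *
        Real.log (((N g b : ℝ) / ((∑ b', N g b' : ℕ) : ℝ)) / Q g b) <
      κ * Fintype.card A / qmin * ∑ g, Real.log ((∑ b', N g b' : ℕ) : ℝ)) ∧
    κ * Fintype.card A / qmin * ∑ g, Real.log ((∑ b', N g b' : ℕ) : ℝ) ≤
      κ * Fintype.card A / qmin * Fintype.card (Γ → A) *
        Real.log ((Finset.univ.sup (fun g : Γ → A => ∑ b', N g b') : ℕ) : ℝ) := by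
  obtain ⟨g0, b0, hg0b0⟩ := hNe
  have hg0 : 1 ≤ ∑ b', N g0 b' :=
    le_trans hg0b0 (Finset.single_le_sum (f := fun b => N g0 b) (fun _ _ => Nat.zero_le _)
      (Finset.mem_univ b0))
  have hstrict : ∀ g : Γ → A, 1 ≤ ∑ b', N g b' →
      ∑ b, (N g b : ℝ) * Real.log (((N g b : ℝ) / ((∑ b', N g b' : ℕ) : ℝ)) / Q g b) <
        κ * Fintype.card A / qmin * Real.log ((∑ b', N g b' : ℕ) : ℝ) := fun g hg =>
    per_g (N g) (Q g) qmin κ hqmin (hQ g) (hQ1 g) hg (fun b => (htyp g b hg).1)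
  have hle : ∀ g : Γ → A,
      ∑ b, (N g b : ℝ) * Real.log (((N g b : ℝ) / ((∑ b', N g b' : ℕ) : ℝ)) / Q g b) ≤
        κ * Fintype.card A / qmin * Real.log ((∑ b', N g b' : ℕ) : ℝ) := by
    intro g
    rcases Nat.eq_zero_or_pos (∑ b', N g b') with h0 | h0
    · have hz : ∀ b, N g b = 0 := by
        intro b
        exact (Finset.sum_eq_zero_iff.mp h0) b (Finset.mem_univ b)
      simp [hz, h0]
    · exact (hstrict g h0).le
  constructor
  · rw [Finset.mul_sum]
    exact Finset.sum_lt_sum (fun g _ => hle g)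
      ⟨g0, Finset.mem_univ g0, hstrict g0 hg0⟩
  · set Nmax : ℕ := Finset.univ.sup (fun g : Γ → A => ∑ b', N g b') with hNmax
    have hsup : ∀ g : Γ → A, (∑ b', N g b') ≤ Nmax := fun g =>
      Finset.le_sup (f := fun g : Γ → A => ∑ b', N g b') (Finset.mem_univ g)
    have hNmax1 : 1 ≤ Nmax := le_trans hg0 (hsup g0)
    have hlogmax : 0 ≤ Real.log (Nmax : ℝ) := Real.log_nonneg (by exact_mod_cast hNmax1)
    have hC : 0 ≤ κ * Fintype.card A / qmin := by positivity
    have hsum : ∑ g : Γ → A, Real.log ((∑ b', N g b' : ℕ) : ℝ) ≤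
        Fintype.card (Γ → A) * Real.log (Nmax : ℝ) := by
      have := Finset.sum_le_card_nsmul Finset.univ
        (fun g : Γ → A => Real.log ((∑ b', N g b' : ℕ) : ℝ)) (Real.log (Nmax : ℝ))
        (fun g _ => ?_)
      · simpa [Finset.card_univ, nsmul_eq_mul] using this
      · rcases Nat.eq_zero_or_pos (∑ b', N g b') with h0 | h0
        · simpa [h0] using hlogmax
        · exact Real.log_le_log (by exact_mod_cast h0) (by exact_mod_cast hsup g)
    calc κ * Fintype.card A / qmin * ∑ g, Real.log ((∑ b', N g b' : ℕ) : ℝ)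
        ≤ κ * Fintype.card A / qmin * (Fintype.card (Γ → A) * Real.log (Nmax : ℝ)) :=
          mul_le_mul_of_nonneg_left hsum hC
      _ = κ * Fintype.card A / qmin * Fintype.card (Γ → A) * Real.log (Nmax : ℝ) := by ring
end
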